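/- Fix $K \ge 0$. Let $S_K$ be the graph obtained from a 2-star with $3K+2$ leaves (a star with $3K+2$ edges, each edge subdivided once) by adding, for every pair of leaves $u,v$, a path of length 3 (three edges, two new internal vertices) between $u$ and $v$. Let $G$ be the graph formed by two disjoint copies of $S_K$ with their centers joined by an edge. Then $G$ is not $(0,K)$-colorable: there is no partition of $V(G)$ into an independent set and a set inducing a subgraph of maximum degree at most $K$. -/
import Mathlib


/-- Vertices of `S_K`: the center, the `3K+2` subdivision vertices of the star edges,
the `3K+2` leaves, and, for each pair of leaves, two internal vertices of the connecting
path of length 3. -/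
abbrev SKVert (K : ℕ) :=
  Unit ⊕ Fin (3 * K + 2) ⊕ Fin (3 * K + 2) ⊕
    ({p : Fin (3 * K + 2) × Fin (3 * K + 2) // p.1 < p.2} × Fin 2)

/-- The graph `S_K`: a 2-star with `3K+2` leaves (center — subdivision vertex `i` — leaf
`i`), together with, for every pair of leaves `a < b`, a path `a — x — y — b` with two new
internal vertices. -/
def SKGraph (K : ℕ) : SimpleGraph (SKVert K) :=
  SimpleGraph.fromRel (fun x y =>
    match x, y with
    | .inl _, .inr (.inl _) => True
    | .inr (.inl i), .inr (.inr (.inl j)) => i = j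
    | .inr (.inr (.inl u)), .inr (.inr (.inr (⟨(a, b), _⟩, e))) =>
        (e = 0 ∧ u = a) ∨ (e = 1 ∧ u = b)
    | .inr (.inr (.inr (p, _))), .inr (.inr (.inr (p', _))) => p = p'
    | _, _ => False)

/-- The tightness example for girth 7: two disjoint copies of `S_K` with their centers
joined by an edge. -/
def twoSKGraph (K : ℕ) : SimpleGraph (SKVert K × Bool) :=
  SimpleGraph.fromRel (fun x y =>
    (x.2 = y.2 ∧ (SKGraph K).Adj x.1 y.1) ∨
    (x.2 ≠ y.2 ∧ x.1 = Sum.inl () ∧ y.1 = Sum.inl ()))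

/-! Auxiliary lemmas -/

lemma skAdj_cs (K : ℕ) (i : Fin (3*K+2)) :
    (SKGraph K).Adj (Sum.inl ()) (Sum.inr (Sum.inl i)) := by
  simp [SKGraph, SimpleGraph.fromRel_adj]

lemma skAdj_sl (K : ℕ) (i : Fin (3*K+2)) :
    (SKGraph K).Adj (Sum.inr (Sum.inl i)) (Sum.inr (Sum.inr (Sum.inl i))) := by
  simp [SKGraph, SimpleGraph.fromRel_adj]

lemma skAdj_lx (K : ℕ) (q : {p : Fin (3 * K + 2) × Fin (3 * K + 2) // p.1 < p.2}) :
    (SKGraph K).Adj (Sum.inr (Sum.inr (Sum.inl q.1.1))) (Sum.inr (Sum.inr (Sum.inr (q, 0)))) := by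
  obtain ⟨⟨a, c⟩, h⟩ := q
  simp [SKGraph, SimpleGraph.fromRel_adj]

lemma skAdj_ly (K : ℕ) (q : {p : Fin (3 * K + 2) × Fin (3 * K + 2) // p.1 < p.2}) :
    (SKGraph K).Adj (Sum.inr (Sum.inr (Sum.inl q.1.2))) (Sum.inr (Sum.inr (Sum.inr (q, 1)))) := by
  obtain ⟨⟨a, c⟩, h⟩ := q
  simp [SKGraph, SimpleGraph.fromRel_adj]

lemma skAdj_xy (K : ℕ) (q : {p : Fin (3 * K + 2) × Fin (3 * K + 2) // p.1 < p.2}) :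
    (SKGraph K).Adj (Sum.inr (Sum.inr (Sum.inr (q, 0)))) (Sum.inr (Sum.inr (Sum.inr (q, 1)))) := by
  simp [SKGraph, SimpleGraph.fromRel_adj]

lemma twoAdj_of_skAdj (K : ℕ) (b : Bool) {x y : SKVert K} (h : (SKGraph K).Adj x y) :
    (twoSKGraph K).Adj (x, b) (y, b) := by
  rw [twoSKGraph, SimpleGraph.fromRel_adj]
  exact ⟨by simp [Prod.ext_iff, h.ne], Or.inl (Or.inl ⟨rfl, h⟩)⟩

lemma twoAdj_cc (K : ℕ) :
    (twoSKGraph K).Adj ((Sum.inl () : SKVert K), true) ((Sum.inl () : SKVert K), false) := by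
  rw [twoSKGraph, SimpleGraph.fromRel_adj]
  exact ⟨by simp, Or.inl (Or.inr ⟨by simp, rfl, rfl⟩)⟩

lemma card_le_ncard_of_inj {α V : Type*} [DecidableEq V] (s : Finset α) (φ : α → V) (N : Set V)
    (hfin : N.Finite) (hinj : Set.InjOn φ s) (hmem : ∀ a ∈ s, φ a ∈ N) :
    s.card ≤ N.ncard := by
  have h1 : (s.image φ).card = s.card := Finset.card_image_of_injOn hinj
  have h2 : ↑(s.image φ) ⊆ N := by
    intro v hv
    simp only [Finset.coe_image, Set.mem_image, Finset.mem_coe] at hv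
    obtain ⟨a, ha, rfl⟩ := hv
    exact hmem a ha
  calc s.card = (↑(s.image φ) : Set V).ncard := by rw [Set.ncard_coe_finset, h1]
    _ ≤ N.ncard := Set.ncard_le_ncard h2 hfin


/-- The graph formed by two copies of `S_K` with centers joined is not `(0,K)`-colorable:
there is no partition of its vertices into an independent set (`false`) and a set (`true`)
inducing a subgraph of maximum degree at most `K`. -/
theorem twoSKGraph_not_0K_colorable (K : ℕ) :
    ¬ ∃ f : SKVert K × Bool → Bool,
        (∀ v, f v = false → ∀ u, (twoSKGraph K).Adj v u → f u ≠ false) ∧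
        (∀ v, f v = true → {u | (twoSKGraph K).Adj v u ∧ f u = true}.ncard ≤ K) := by
  classical
  rintro ⟨f, h1, h2⟩
  have hcenter : ∀ b : Bool, f (Sum.inl (), b) = false := by
    intro b
    by_contra hc'
    have hc : f ((Sum.inl () : SKVert K), b) = true := by simpa using hc'
    set sv : Fin (3*K+2) → SKVert K × Bool := fun i => (Sum.inr (Sum.inl i), b) with hsv
    set lv : Fin (3*K+2) → SKVert K × Bool := fun i => (Sum.inr (Sum.inr (Sum.inl i)), b) with hlv
    set pv : ({p : Fin (3 * K + 2) × Fin (3 * K + 2) // p.1 < p.2}) → Fin 2 → SKVert K × Bool :=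
      fun q e => (Sum.inr (Sum.inr (Sum.inr (q, e))), b) with hpv
    -- the set of subdivision vertices colored true has size ≤ K
    set S : Finset (Fin (3*K+2)) := Finset.univ.filter (fun i => f (sv i) = true) with hS
    have hScard : S.card ≤ K := by
      refine le_trans (card_le_ncard_of_inj S sv
        {u | (twoSKGraph K).Adj ((Sum.inl () : SKVert K), b) u ∧ f u = true}
        (Set.toFinite _) ?_ ?_) (h2 _ hc)
      · intro i _ j _ hij
        simpa [hsv, Prod.ext_iff] using hij
      · intro i hi
        refine ⟨twoAdj_of_skAdj K b (skAdj_cs K i), ?_⟩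
        simpa [hS] using hi
    set T : Finset (Fin (3*K+2)) := Sᶜ with hT
    have hTcard : 2*K+2 ≤ T.card := by
      have h4 := Finset.card_compl S
      rw [Fintype.card_fin, ← hT] at h4
      omega
    have hTl : ∀ i ∈ T, f (lv i) = true := by
      intro i hi
      have hsi : f (sv i) = false := by
        have : ¬ f (sv i) = true := by simp only [hT, Finset.mem_compl, hS, Finset.mem_filter, Finset.mem_univ, true_and] at hi; exact hi
        simpa using this
      have := h1 (sv i) hsi (lv i) (twoAdj_of_skAdj K b (skAdj_sl K i))
      simpa using this
    -- choice of a true internal path vertex for each pair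
    set vert : ({p : Fin (3 * K + 2) × Fin (3 * K + 2) // p.1 < p.2}) → SKVert K × Bool :=
      fun q => if f (pv q 0) = true then pv q 0 else pv q 1 with hvertdef
    set idx : ({p : Fin (3 * K + 2) × Fin (3 * K + 2) // p.1 < p.2}) → Fin (3*K+2) :=
      fun q => if f (pv q 0) = true then q.1.1 else q.1.2 with hidxdef
    have hvert : ∀ q, f (vert q) = true ∧ (twoSKGraph K).Adj (lv (idx q)) (vert q) := by
      intro q
      by_cases hx : f (pv q 0) = true
      · refine ⟨by simp [hvertdef, hx], ?_⟩
        simp only [hvertdef, hidxdef, hx, if_true]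
        exact twoAdj_of_skAdj K b (skAdj_lx K q)
      · have hx0 : f (pv q 0) = false := by simpa using hx
        have hy := h1 (pv q 0) hx0 (pv q 1) (twoAdj_of_skAdj K b (skAdj_xy K q))
        refine ⟨by simpa [hvertdef, hx] using hy, ?_⟩
        simp only [hvertdef, hidxdef, hx, if_false]
        exact twoAdj_of_skAdj K b (skAdj_ly K q)
    have hvertinj : Function.Injective vert := by
      intro q q' h
      have h' : ∃ e e', pv q e = pv q' e' := by
        by_cases hx : f (pv q 0) = true <;> by_cases hx' : f (pv q' 0) = true <;>
          simp only [hvertdef, hx, hx', if_true, if_false] at h <;> exact ⟨_, _, h⟩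
      obtain ⟨e, e', he⟩ := h'
      have h2' : q = q' ∧ e = e' := by simpa [hpv, Prod.ext_iff] using he
      exact h2'.1
    set P : Finset ({p : Fin (3 * K + 2) × Fin (3 * K + 2) // p.1 < p.2}) :=
      Finset.univ.filter (fun q => q.1.1 ∈ T ∧ q.1.2 ∈ T) with hP
    have hidxT : ∀ q ∈ P, idx q ∈ T := by
      intro q hq
      have hq' : q.1.1 ∈ T ∧ q.1.2 ∈ T := by simpa [hP] using hq
      by_cases hx : f (pv q 0) = true <;> simp only [hidxdef, hx, if_true, if_false]
      · exact hq'.1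
      · exact hq'.2
    have hfiber : ∀ i ∈ T, (P.filter (fun q => idx q = i)).card ≤ K := by
      intro i hi
      refine le_trans (card_le_ncard_of_inj _ vert
        {u | (twoSKGraph K).Adj (lv i) u ∧ f u = true} (Set.toFinite _)
        (fun q _ q' _ h => hvertinj h) ?_) (h2 (lv i) (hTl i hi))
      intro q hq
      have hq' : idx q = i := (Finset.mem_filter.mp hq).2
      obtain ⟨hv1, hv2⟩ := hvert q
      exact ⟨hq' ▸ hv2, hv1⟩
    have hPle : P.card ≤ T.card * K := by
      rw [Finset.card_eq_sum_card_fiberwise hidxT]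
      calc ∑ i ∈ T, (P.filter (fun q => idx q = i)).card ≤ ∑ _i ∈ T, K :=
            Finset.sum_le_sum hfiber
        _ = T.card * K := by rw [Finset.sum_const, smul_eq_mul]
    -- lower bound for P.card
    have hjunklt : ((⟨0, by omega⟩ : Fin (3*K+2)), (⟨1, by omega⟩ : Fin (3*K+2))).1 <
        ((⟨0, by omega⟩ : Fin (3*K+2)), (⟨1, by omega⟩ : Fin (3*K+2))).2 := by
      simp [Fin.mk_lt_mk]
    set junk : {p : Fin (3 * K + 2) × Fin (3 * K + 2) // p.1 < p.2} := ⟨_, hjunklt⟩ with hjunk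
    set ψ : Fin (3*K+2) × Fin (3*K+2) → {p : Fin (3 * K + 2) × Fin (3 * K + 2) // p.1 < p.2} :=
      fun p => if h : p.1 < p.2 then ⟨p, h⟩ else junk with hψ
    set A := T.offDiag.filter (fun p => p.1 < p.2) with hA
    set B := T.offDiag.filter (fun p => ¬ p.1 < p.2) with hB
    have hAcard : A.card ≤ P.card := by
      refine Finset.card_le_card_of_injOn ψ ?_ ?_
      · intro p hp
        obtain ⟨hpd, hplt⟩ := Finset.mem_filter.mp hp
        obtain ⟨hp1, hp2, _⟩ := Finset.mem_offDiag.mp hpd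
        simp only [hψ, dif_pos hplt]
        exact Finset.mem_filter.mpr ⟨Finset.mem_univ _, hp1, hp2⟩
      · intro p hp p' hp' h
        have hplt := (Finset.mem_filter.mp hp).2
        have hplt' := (Finset.mem_filter.mp hp').2
        simpa [hψ, dif_pos hplt, dif_pos hplt'] using h
    have hBcard : B.card ≤ P.card := by
      refine Finset.card_le_card_of_injOn (fun p => ψ (p.2, p.1)) ?_ ?_
      · intro p hp
        obtain ⟨hpd, hplt⟩ := Finset.mem_filter.mp hp
        obtain ⟨hp1, hp2, hne⟩ := Finset.mem_offDiag.mp hpd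
        have hlt : p.2 < p.1 := lt_of_le_of_ne (not_lt.mp hplt) (by simpa [eq_comm] using hne)
        simp only [hψ, dif_pos hlt]
        exact Finset.mem_filter.mpr ⟨Finset.mem_univ _, hp2, hp1⟩
      · intro p hp p' hp' h
        obtain ⟨hpd, hplt⟩ := Finset.mem_filter.mp hp
        obtain ⟨hp1, hp2, hne⟩ := Finset.mem_offDiag.mp hpd
        obtain ⟨hpd', hplt'⟩ := Finset.mem_filter.mp hp'
        obtain ⟨hp1', hp2', hne'⟩ := Finset.mem_offDiag.mp hpd'
        have hlt : p.2 < p.1 := lt_of_le_of_ne (not_lt.mp hplt) (by simpa [eq_comm] using hne)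
        have hlt' : p'.2 < p'.1 := lt_of_le_of_ne (not_lt.mp hplt') (by simpa [eq_comm] using hne')
        have := h
        simp only [hψ, dif_pos hlt, dif_pos hlt', Subtype.mk.injEq, Prod.ext_iff] at this
        exact Prod.ext this.2 this.1
    have hAB : A.card + B.card = T.offDiag.card :=
      Finset.card_filter_add_card_filter_not _
    have hoff : T.offDiag.card = T.card * T.card - T.card := Finset.offDiag_card T
    -- final arithmetic
    set t := T.card with ht
    have h5 : t * t - t ≤ 2 * (t * K) := by
      calc t * t - t = T.offDiag.card := hoff.symm
        _ = A.card + B.card := hAB.symm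
        _ ≤ P.card + P.card := Nat.add_le_add hAcard hBcard
        _ ≤ t * K + t * K := Nat.add_le_add hPle hPle
        _ = 2 * (t * K) := by ring
    have h5' : t * t ≤ 2 * (t * K) + t := Nat.sub_le_iff_le_add.mp h5
    have h6 : t * (2*K+2) ≤ t * t := Nat.mul_le_mul_left t hTcard
    have h7 : t * (2*K+2) = 2 * (t*K) + 2*t := by ring
    have h6' : 2 * (t * K) + 2 * t ≤ t * t := h7 ▸ h6
    linarith [h5', h6', hTcard]
  exact h1 _ (hcenter true) _ (twoAdj_cc K) (hcenter false)
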